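/- If G is a connected α-critical graph with |V(G)| = 2α(G) + 1 (that is, with defect one), then G is isomorphic to an odd cycle C_n for some odd integer n ≥ 3. -/

import Mathlib

/-!
Hajnal's bound: in an α-critical graph without isolated vertices every vertex has degree at most
`|V| - 2α + 1`, so with defect one every degree is at most `2`. For a vertex `v`, let `X` be the set
of its non-neighbours; then `α(X) = α - 1`, and the core of `X` (the vertices lying in every
maximum stable set of `X`) lies in every stable set `W_u` certifying the criticality of an edge
`vu`, so all its neighbours are in `X`. Two facts then give `|X| ≥ 2α(X)`: the neighbourhood lemma
`|N(S)| ≥ |S|` for stable `S` in an α-critical graph without isolated vertices (Hall's theorem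
plus one critical edge), and the fact that a graph with `|A| < 2α(A)` has a nonempty core
(delete non-critical edges until the graph is α-critical). Degree `1` is impossible as well: the
other edge at the neighbour of a pendant vertex would not be critical. So `G` is connected and
2-regular, i.e. a cycle, of odd length `2α + 1`.
-/

open SimpleGraph

/-- The stability (independence) number of the subgraph of `G` induced on the
vertex set `S`: the maximum cardinality of a stable (independent) subset of `S`. -/
noncomputable def alphaOn {V : Type*} [Fintype V] (G : SimpleGraph V) (S : Set V) : ℕ :=
  sSup {n | ∃ s : Finset V, ↑s ⊆ S ∧ (∀ u ∈ s, ∀ v ∈ s, ¬ G.Adj u v) ∧ s.card = n}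

/-- The stability (independence) number `α(G)` of `G`. -/
noncomputable def alphaNum {V : Type*} [Fintype V] (G : SimpleGraph V) : ℕ :=
  alphaOn G Set.univ

/-- The edge `{u, v}` of `G` is an α-critical edge: deleting it increases the
stability number by one. -/
def IsCriticalEdge {V : Type*} [Fintype V] (G : SimpleGraph V) (u v : V) : Prop :=
  G.Adj u v ∧ alphaNum (G.deleteEdges {s(u, v)}) = alphaNum G + 1

/-- `G` is an α-critical graph: every edge is α-critical. -/
def IsAlphaCritical {V : Type*} [Fintype V] (G : SimpleGraph V) : Prop :=
  ∀ u v, G.Adj u v → alphaNum (G.deleteEdges {s(u, v)}) = alphaNum G + 1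

/-- `S` induces a maximal induced subgraph of `G` with stability number `α(G) - 1`:
`α(G[S]) = α(G) - 1` and adding any further vertex raises the stability number to `α(G)`. -/
def IsMaxAlphaSub {V : Type*} [Fintype V] (G : SimpleGraph V) (S : Set V) : Prop :=
  alphaOn G S + 1 = alphaNum G ∧ ∀ w ∉ S, alphaOn G (insert w S) = alphaNum G

/-- The 1-join `j(G, G₀, H, H₀)` of `G` and `H`, where `A = V(G₀)` and `B = V(H₀)`:
the disjoint union of `G` and `H` together with all edges between `V(G) ∖ A` and
`V(H) ∖ B`. -/
def oneJoin {α β : Type*} (G : SimpleGraph α) (H : SimpleGraph β)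
    (A : Set α) (B : Set β) : SimpleGraph (α ⊕ β) :=
  SimpleGraph.fromRel (fun x y =>
    (∃ a b, x = Sum.inl a ∧ y = Sum.inl b ∧ G.Adj a b) ∨
    (∃ a b, x = Sum.inr a ∧ y = Sum.inr b ∧ H.Adj a b) ∨
    (∃ a b, x = Sum.inl a ∧ y = Sum.inr b ∧ a ∉ A ∧ b ∉ B))

/-- The edge-vertex composition `c(G, e, H, v)` with `e = {v₁, v₂}` and
`N_H(v) = U₁ ⊔ U₂`: vertex set `V(G) ⊔ (V(H) ∖ {v})`, edge set
`(E(G) ∖ {e}) ∪ E(H - v) ∪ {v₁u : u ∈ U₁} ∪ {v₂u : u ∈ U₂}`. -/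
def evComp {α β : Type*} (G : SimpleGraph α) (v₁ v₂ : α) (H : SimpleGraph β) (v : β)
    (U₁ U₂ : Set β) : SimpleGraph (α ⊕ {b : β // b ≠ v}) :=
  SimpleGraph.fromRel (fun x y =>
    (∃ a b, x = Sum.inl a ∧ y = Sum.inl b ∧ G.Adj a b ∧ s(a, b) ≠ s(v₁, v₂)) ∨
    (∃ a b : {b : β // b ≠ v}, x = Sum.inr a ∧ y = Sum.inr b ∧ H.Adj a b) ∨
    (∃ b : {b : β // b ≠ v}, x = Sum.inl v₁ ∧ y = Sum.inr b ∧ (b : β) ∈ U₁) ∨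
    (∃ b : {b : β // b ≠ v}, x = Sum.inl v₂ ∧ y = Sum.inr b ∧ (b : β) ∈ U₂))

/-- The splitting `s(H, v)` of the vertex `v` of `H`, with `N_H(v) = N₁ ⊔ N₂`.
The new vertices `v′`, `v″`, `u` are represented by `Sum.inr 0`, `Sum.inr 1`,
`Sum.inr 2` respectively. -/
def splitting {β : Type*} (H : SimpleGraph β) (v : β) (N₁ N₂ : Set β) :
    SimpleGraph ({b : β // b ≠ v} ⊕ Fin 3) :=
  SimpleGraph.fromRel (fun x y =>
    (∃ a b : {b : β // b ≠ v}, x = Sum.inl a ∧ y = Sum.inl b ∧ H.Adj a b) ∨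
    (∃ a : {b : β // b ≠ v}, x = Sum.inl a ∧ y = Sum.inr 0 ∧ (a : β) ∈ N₁) ∨
    (∃ a : {b : β // b ≠ v}, x = Sum.inl a ∧ y = Sum.inr 1 ∧ (a : β) ∈ N₂) ∨
    (x = Sum.inr 0 ∧ y = Sum.inr 2) ∨ (x = Sum.inr 1 ∧ y = Sum.inr 2))

/-- The duplication `d(G, v)` of the vertex `v` of `G`: a new vertex `v′`
(represented by `Sum.inr ()`) is added, adjacent exactly to the closed
neighborhood `N_G[v]`. -/
def duplication {α : Type*} (G : SimpleGraph α) (v : α) : SimpleGraph (α ⊕ Unit) :=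
  SimpleGraph.fromRel (fun x y =>
    (∃ a b, x = Sum.inl a ∧ y = Sum.inl b ∧ G.Adj a b) ∨
    (∃ a, x = Sum.inl a ∧ y = Sum.inr () ∧ a ∈ insert v (G.neighborSet v)))

/-- A graph is duplication free iff it contains no pair of adjacent vertices
with equal closed neighborhoods. -/
def DuplicationFree {α : Type*} (G : SimpleGraph α) : Prop :=
  ∀ u v, G.Adj u v → insert u (G.neighborSet u) ≠ insert v (G.neighborSet v)

/-- `G` is 2-connected: it has at least three vertices and the deletion of any
single vertex leaves it connected. -/
def TwoConnected {V : Type*} [Fintype V] (G : SimpleGraph V) : Prop :=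
  3 ≤ Fintype.card V ∧ ∀ x : V, (G.induce {x}ᶜ).Connected

open Finset in
theorem Finset.exists_injOn_of_card_le_card_biUnion {ι α : Type*} [DecidableEq α] [Nonempty α]
    {N : Finset ι} {t : ι → Finset α} (h : ∀ U ⊆ N, #U ≤ #(U.biUnion t)) :
    ∃ f : ι → α, Set.InjOn f N ∧ ∀ i ∈ N, f i ∈ t i := by
  classical
  obtain ⟨f, hf, hft⟩ := (Finset.all_card_le_biUnion_card_iff_exists_injective
    fun i : N => t i).1 fun U => by
      have hU := h (U.map (Function.Embedding.subtype _)) (by simp +contextual [Finset.subset_iff])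
      rwa [Finset.card_map, Finset.map_eq_image, Finset.image_biUnion] at hU
  refine ⟨fun i => if hi : i ∈ N then f ⟨i, hi⟩ else Classical.arbitrary α, ?_, ?_⟩
  · intro i hi j hj hij
    simp only [Finset.mem_coe] at hi hj
    exact congrArg Subtype.val (hf (show f ⟨i, hi⟩ = f ⟨j, hj⟩ by simpa [hi, hj] using hij))
  · intro i hi
    simpa [hi] using hft ⟨i, hi⟩

namespace SimpleGraph

open Finset

variable {V : Type*} {G : SimpleGraph V} {A S : Finset V}

lemma isIndepSet_coe_iff {s : Finset V} :
    G.IsIndepSet (s : Set V) ↔ ∀ u ∈ s, ∀ v ∈ s, ¬G.Adj u v :=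
  ⟨fun h _ hu _ hv huv => h hu hv huv.ne huv, fun h u hu v hv _ => h u hu v hv⟩

lemma isIndepSet_insert_iff {s : Set V} {a : V} :
    G.IsIndepSet (insert a s) ↔ G.IsIndepSet s ∧ ∀ b ∈ s, ¬G.Adj a b := by
  have : Std.Symm fun u v => ¬G.Adj u v := ⟨fun _ _ h h' => h h'.symm⟩
  rw [IsIndepSet, Set.pairwise_insert_of_symm]
  exact and_congr_right fun _ => forall₂_congr fun b _ => ⟨fun h hab => h (G.ne_of_adj hab) hab,
    fun h _ => h⟩

lemma isIndepSet_union_iff {s t : Set V} :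
    G.IsIndepSet (s ∪ t) ↔ G.IsIndepSet s ∧ G.IsIndepSet t ∧ ∀ a ∈ s, ∀ b ∈ t, ¬G.Adj a b := by
  have : Std.Symm fun u v => ¬G.Adj u v := ⟨fun _ _ h h' => h h'.symm⟩
  rw [IsIndepSet, Set.pairwise_union_of_symm]
  exact and_congr_right fun _ => and_congr_right fun _ => forall₂_congr fun a _ =>
    forall₂_congr fun b _ => ⟨fun h hab => h (G.ne_of_adj hab) hab, fun h _ => h⟩

lemma IsIndepSet.anti {s : Set V} (hHG : H ≤ G) (hs : G.IsIndepSet s) : H.IsIndepSet s :=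
  fun _ hu _ hv huv h => hs hu hv huv (hHG h)

open Classical in
noncomputable def neighborsIn (G : SimpleGraph V) (A S : Finset V) : Finset V :=
  {w ∈ A | ∃ s ∈ S, G.Adj s w}

lemma mem_neighborsIn {w : V} : w ∈ neighborsIn G A S ↔ w ∈ A ∧ ∃ s ∈ S, G.Adj s w := by
  simp [neighborsIn]

lemma neighborsIn_subset : neighborsIn G A S ⊆ A := fun _ hw => (mem_neighborsIn.1 hw).1

section DecidableEq

variable [DecidableEq V]

lemma biUnion_neighborsIn_singleton (G : SimpleGraph V) (S U : Finset V) :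
    U.biUnion (fun u => neighborsIn G S {u}) = neighborsIn G S U := by
  ext w
  simp only [mem_biUnion, mem_neighborsIn, mem_singleton, exists_eq_left]
  tauto

lemma neighborsIn_subset_sdiff {S : Finset V} (hS : G.IsIndepSet (S : Set V)) :
    neighborsIn G A S ⊆ A \ S := fun w hw => by
  obtain ⟨hwA, s, hs, hsw⟩ := mem_neighborsIn.1 hw
  exact mem_sdiff.2 ⟨hwA, fun hwS => hS hs hwS hsw.ne hsw⟩

end DecidableEq

section Fintype

variable [Fintype V] {H : SimpleGraph V}

private lemma bddAbove_indepCards (G : SimpleGraph V) (S : Set V) :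
    BddAbove {n | ∃ s : Finset V, ↑s ⊆ S ∧ (∀ u ∈ s, ∀ v ∈ s, ¬G.Adj u v) ∧ #s = n} :=
  ⟨Fintype.card V, by rintro n ⟨s, -, -, rfl⟩; exact card_le_univ s⟩

lemma IsIndepSet.card_le_alphaOn {s : Finset V} (hs : G.IsIndepSet (s : Set V)) (hsA : s ⊆ A) :
    #s ≤ alphaOn G A :=
  le_csSup (bddAbove_indepCards G A) ⟨s, coe_subset.2 hsA, isIndepSet_coe_iff.1 hs, rfl⟩

lemma exists_isIndepSet_card_eq_alphaOn (G : SimpleGraph V) (A : Finset V) :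
    ∃ s ⊆ A, G.IsIndepSet (s : Set V) ∧ #s = alphaOn G A := by
  obtain ⟨s, hsA, hs, hcard⟩ := Nat.sSup_mem (by exact ⟨0, ∅, by simp⟩) (bddAbove_indepCards G A)
  exact ⟨s, coe_subset.1 hsA, isIndepSet_coe_iff.2 hs, hcard⟩

lemma alphaNum_eq_alphaOn_univ (G : SimpleGraph V) : alphaNum G = alphaOn G (univ : Finset V) := by
  rw [coe_univ]; rfl

lemma alphaOn_anti (hHG : H ≤ G) (A : Finset V) : alphaOn G A ≤ alphaOn H A := by
  obtain ⟨s, hsA, hs, hcard⟩ := exists_isIndepSet_card_eq_alphaOn G A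
  exact hcard ▸ (hs.anti hHG).card_le_alphaOn hsA

def IsAlphaCriticalOn (G : SimpleGraph V) (A : Finset V) : Prop :=
  ∀ ⦃x y⦄, x ∈ A → y ∈ A → G.Adj x y → alphaOn (G.deleteEdges {s(x, y)}) A = alphaOn G A + 1

lemma _root_.IsAlphaCritical.isAlphaCriticalOn_univ (hG : IsAlphaCritical G) :
    IsAlphaCriticalOn G univ := by
  intro x y _ _ hxy
  simpa only [alphaNum_eq_alphaOn_univ] using hG x y hxy

variable [DecidableEq V]

lemma alphaOn_deleteEdges_le (G : SimpleGraph V) (A : Finset V) (x y : V) :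
    alphaOn (G.deleteEdges {s(x, y)}) A ≤ alphaOn G A + 1 := by
  obtain ⟨s, hsA, hs, hcard⟩ := exists_isIndepSet_card_eq_alphaOn (G.deleteEdges {s(x, y)}) A
  have hind : G.IsIndepSet (s.erase x : Set V) := by
    intro u hu v hv huv hadj
    simp only [coe_erase, Set.mem_sdiff, Set.mem_singleton_iff] at hu hv
    refine hs hu.1 hv.1 huv (deleteEdges_adj.2 ⟨hadj, ?_⟩)
    rw [Set.mem_singleton_iff, Sym2.eq_iff]
    tauto
  have := hind.card_le_alphaOn ((erase_subset x s).trans hsA)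
  have := pred_card_le_card_erase (a := x) (s := s)
  omega

lemma exists_isIndepSet_of_alphaOn_deleteEdges_eq {x y : V} (hxy : G.Adj x y)
    (hcrit : alphaOn (G.deleteEdges {s(x, y)}) A = alphaOn G A + 1) :
    ∃ W ⊆ A, G.IsIndepSet (W : Set V) ∧ #W + 1 = alphaOn G A ∧
      ∀ w ∈ W, w ≠ x ∧ w ≠ y ∧ ¬G.Adj x w ∧ ¬G.Adj y w := by
  obtain ⟨T, hTA, hT, hcard⟩ := exists_isIndepSet_card_eq_alphaOn (G.deleteEdges {s(x, y)}) A
  have hedge : ∀ a ∈ T, ∀ b ∈ T, G.Adj a b → s(a, b) = s(x, y) := fun a ha b hb hab =>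
    by_contra fun h => hT ha hb hab.ne (deleteEdges_adj.2 ⟨hab, h⟩)
  have hxyT : x ∈ T ∧ y ∈ T := by
    by_contra h
    have hTG : G.IsIndepSet (T : Set V) := fun a ha b hb _ hab => h <| by
      rcases Sym2.eq_iff.1 (hedge a ha b hb hab) with ⟨rfl, rfl⟩ | ⟨rfl, rfl⟩ <;> tauto
    have := hTG.card_le_alphaOn hTA
    omega
  have hW : ∀ w ∈ (T.erase x).erase y, w ≠ x ∧ w ≠ y ∧ w ∈ T := fun w hw => by
    simp only [mem_erase] at hw; tauto
  refine ⟨(T.erase x).erase y, (erase_subset _ _).trans ((erase_subset _ _).trans hTA), ?_, ?_,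
    fun w hw => ⟨(hW w hw).1, (hW w hw).2.1, fun h => (hW w hw).2.1 ?_, fun h => (hW w hw).1 ?_⟩⟩
  · intro a ha b hb _ hab
    have hedge_ab := hedge a (hW a ha).2.2 b (hW b hb).2.2 hab
    rcases Sym2.eq_iff.1 hedge_ab with ⟨h, -⟩ | ⟨h, -⟩
    exacts [(hW a ha).1 h, (hW a ha).2.1 h]
  · rw [card_erase_of_mem (mem_erase.2 ⟨hxy.ne', hxyT.2⟩), card_erase_of_mem hxyT.1]
    have := card_le_card (insert_subset hxyT.1 (singleton_subset_iff.2 hxyT.2))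
    rw [card_pair hxy.ne] at this
    omega
  · exact Sym2.congr_right.1 (hedge x hxyT.1 w (hW w hw).2.2 h)
  · exact Sym2.congr_right.1 ((hedge y hxyT.2 w (hW w hw).2.2 h).trans Sym2.eq_swap)

lemma IsAlphaCriticalOn.mem_image_of_injOn (hcrit : IsAlphaCriticalOn G A) (hSA : S ⊆ A)
    (hS : G.IsIndepSet (S : Set V)) {x₀ y : V} (hx₀ : x₀ ∈ S) (hy : y ∈ A) (hx₀y : G.Adj x₀ y)
    {M : V → V} (hM : Set.InjOn M (neighborsIn G A S))
    (hMS : ∀ u ∈ neighborsIn G A S, M u ∈ S ∧ G.Adj u (M u)) :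
    x₀ ∈ (neighborsIn G A S).image M := by
  by_contra hx₀M
  set N := neighborsIn G A S
  have hyN : y ∈ N := mem_neighborsIn.2 ⟨hy, x₀, hx₀, hx₀y⟩
  obtain ⟨W, hWA, hW, hWcard, hWav⟩ :=
    exists_isIndepSet_of_alphaOn_deleteEdges_eq hx₀y (hcrit (hSA hx₀) hy hx₀y)
  obtain ⟨hx₁S, hyx₁⟩ := hMS y hyN
  have hx₀W : x₀ ∉ W := fun h => (hWav x₀ h).1 rfl
  have hx₁W : M y ∉ W := fun h => (hWav (M y) h).2.2.2 hyx₁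
  have hx₁ : M y ∈ (S \ W).erase x₀ :=
    mem_erase.2 ⟨fun h => hx₀M (mem_image.2 ⟨y, hyN, h⟩), mem_sdiff.2 ⟨hx₁S, hx₁W⟩⟩
  -- `M` embeds `W ∩ N` into `S \ W` minus `x₀` and `M y`, so trading `W ∩ N` for `S \ W`
  -- turns `W` into a stable set of size `α + 1`
  have hmaps : Set.MapsTo M ↑(W ∩ N) ↑(((S \ W).erase x₀).erase (M y)) := by
    intro w hw
    rw [mem_coe, mem_inter] at hw
    obtain ⟨hMw, hwMw⟩ := hMS w hw.2
    rw [mem_coe, mem_erase, mem_erase, mem_sdiff]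
    exact ⟨fun h => (hWav w hw.1).2.1 (hM hw.2 hyN h), fun h => hx₀M (mem_image.2 ⟨w, hw.2, h⟩),
      hMw, fun h => hW hw.1 h hwMw.ne hwMw⟩
  have hWN : #(W ∩ N) + 2 ≤ #(S \ W) := by
    have hx₀' : x₀ ∈ S \ W := mem_sdiff.2 ⟨hx₀, hx₀W⟩
    have h₁ := card_le_card_of_injOn M hmaps (hM.mono (by simp [Set.subset_def]))
    have h₂ := card_pos.2 ⟨_, hx₁⟩
    rw [card_erase_of_mem hx₁, card_erase_of_mem hx₀'] at h₁
    rw [card_erase_of_mem hx₀'] at h₂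
    omega
  have hT : G.IsIndepSet ↑((W \ N) ∪ (S \ W)) := by
    rw [coe_union, isIndepSet_union_iff]
    refine ⟨hW.mono (by simp), hS.mono (by simp), fun a ha b hb hab => ?_⟩
    simp only [coe_sdiff, Set.mem_sdiff, mem_coe] at ha hb
    exact ha.2 (mem_neighborsIn.2 ⟨hWA ha.1, b, hb.1, hab.symm⟩)
  have hTA := hT.card_le_alphaOn (union_subset (sdiff_subset.trans hWA) (sdiff_subset.trans hSA))
  rw [card_union_of_disjoint (disjoint_sdiff.mono_left sdiff_subset)] at hTA
  have := card_sdiff_add_card_inter W N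
  omega

theorem IsAlphaCriticalOn.card_le_card_neighborsIn (hcrit : IsAlphaCriticalOn G A)
    (hA : ∀ x ∈ A, ∃ y ∈ A, G.Adj x y) (hSA : S ⊆ A) (hS : G.IsIndepSet (S : Set V)) :
    #S ≤ #(neighborsIn G A S) := by
  induction hn : #S using Nat.strong_induction_on generalizing S with
  | _ n ih =>
  subst hn
  by_contra! hlt
  set N := neighborsIn G A S
  -- minimality of `S` gives Hall's condition for matching `N` into `S`
  have hall : ∀ U ⊆ N, #U ≤ #(neighborsIn G S U) := by
    intro U hU
    by_contra! hU'
    obtain ⟨u, hu⟩ := card_pos.1 (by omega : 0 < #U)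
    obtain ⟨-, s, hs, hsu⟩ := mem_neighborsIn.1 (hU hu)
    have hNU : neighborsIn G S U ⊆ S := neighborsIn_subset
    have hne : 0 < #(neighborsIn G S U) := card_pos.2 ⟨s, mem_neighborsIn.2 ⟨hs, u, hu, hsu.symm⟩⟩
    have hsub : neighborsIn G A (S \ neighborsIn G S U) ⊆ N \ U := by
      intro w hw
      obtain ⟨hwA, t, ht, htw⟩ := mem_neighborsIn.1 hw
      rw [mem_sdiff] at ht ⊢
      exact ⟨mem_neighborsIn.2 ⟨hwA, t, ht.1, htw⟩,
        fun hwU => ht.2 (mem_neighborsIn.2 ⟨ht.1, w, hwU, htw.symm⟩)⟩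
    have h₁ := ih _ (by rw [card_sdiff_of_subset hNU]; omega) (sdiff_subset.trans hSA)
      (hS.mono (by simp)) rfl
    have h₂ := card_le_card hsub
    rw [card_sdiff_of_subset hNU] at h₁
    rw [card_sdiff_of_subset hU] at h₂
    have := card_le_card hNU
    have := card_le_card hU
    omega
  obtain ⟨x, hx⟩ := card_pos.1 (by omega : 0 < #S)
  have : Nonempty V := ⟨x⟩
  obtain ⟨M, hM, hMN⟩ := exists_injOn_of_card_le_card_biUnion (t := fun u => neighborsIn G S {u})
    fun U hU => by rw [biUnion_neighborsIn_singleton]; exact hall U hU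
  have hMS : ∀ u ∈ N, M u ∈ S ∧ G.Adj u (M u) := fun u hu => by
    simpa [mem_neighborsIn] using hMN u hu
  have hSM : S ⊆ N.image M := fun x₀ hx₀ => by
    obtain ⟨y, hy, hx₀y⟩ := hA x₀ (hSA hx₀)
    exact hcrit.mem_image_of_injOn hSA hS hx₀ hy hx₀y hM hMS
  have := (card_le_card hSM).trans card_image_le
  omega

open Classical in
noncomputable def alphaCore (G : SimpleGraph V) (A : Finset V) : Finset V :=
  {c ∈ A | ∀ s ⊆ A, G.IsIndepSet (s : Set V) → #s = alphaOn G A → c ∈ s}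

lemma mem_alphaCore {c : V} : c ∈ alphaCore G A ↔
    c ∈ A ∧ ∀ s ⊆ A, G.IsIndepSet (s : Set V) → #s = alphaOn G A → c ∈ s := by
  simp [alphaCore]

lemma alphaCore_subset_of_le (hHG : H ≤ G) (h : alphaOn H A = alphaOn G A) :
    alphaCore H A ⊆ alphaCore G A := fun c hc => by
  rw [mem_alphaCore] at hc ⊢
  exact ⟨hc.1, fun s hsA hs hcard => hc.2 s hsA (hs.anti hHG) (hcard.trans h.symm)⟩

lemma mem_alphaCore_of_forall_not_adj {x : V} (hx : x ∈ A) (h : ∀ y ∈ A, ¬G.Adj x y) :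
    x ∈ alphaCore G A := by
  refine mem_alphaCore.2 ⟨hx, fun s hsA hs hcard => by_contra fun hxs => ?_⟩
  have hxs' : G.IsIndepSet ↑(insert x s) := by
    rw [coe_insert, isIndepSet_insert_iff]
    exact ⟨hs, fun b hb => h b (hsA hb)⟩
  have := hxs'.card_le_alphaOn (insert_subset hx hsA)
  rw [card_insert_of_notMem hxs] at this
  omega

theorem two_mul_alphaOn_le_card_of_alphaCore_eq_empty (h : alphaCore G A = ∅) :
    2 * alphaOn G A ≤ #A := by
  induction G using WellFoundedLT.induction with
  | _ G ih =>
  by_cases hcrit : IsAlphaCriticalOn G A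
  · by_cases hiso : ∃ x ∈ A, ∀ y ∈ A, ¬G.Adj x y
    · obtain ⟨x, hx, hxA⟩ := hiso
      simpa [h] using mem_alphaCore_of_forall_not_adj hx hxA
    push Not at hiso
    obtain ⟨S, hSA, hS, hcard⟩ := exists_isIndepSet_card_eq_alphaOn G A
    have h₁ := hcrit.card_le_card_neighborsIn hiso hSA hS
    have h₂ := card_le_card (neighborsIn_subset_sdiff (A := A) hS)
    rw [card_sdiff_of_subset hSA] at h₂
    have := card_le_card hSA
    omega
  -- deleting a non-critical edge keeps `α(A)` and can only shrink the core
  simp only [IsAlphaCriticalOn, not_forall] at hcrit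
  obtain ⟨x, y, -, -, hxy, hne⟩ := hcrit
  have heq : alphaOn (G.deleteEdges {s(x, y)}) A = alphaOn G A := by
    have := alphaOn_deleteEdges_le G A x y
    have := alphaOn_anti (G.deleteEdges_le {s(x, y)}) A
    omega
  have hlt : G.deleteEdges {s(x, y)} < G := (G.deleteEdges_le _).lt_of_ne fun h' => by
    have : (G.deleteEdges {s(x, y)}).Adj x y := h'.symm ▸ hxy
    simp at this
  have := ih _ hlt (subset_empty.1 (h ▸ alphaCore_subset_of_le (G.deleteEdges_le _) heq))
  rwa [heq] at this

lemma alphaCore_subset_self : alphaCore G A ⊆ A := fun _ hc => (mem_alphaCore.1 hc).1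

lemma alphaCore_subset {s : Finset V} (hsA : s ⊆ A) (hs : G.IsIndepSet (s : Set V))
    (hcard : #s = alphaOn G A) : alphaCore G A ⊆ s :=
  fun _ hc => (mem_alphaCore.1 hc).2 s hsA hs hcard

lemma isIndepSet_alphaCore (G : SimpleGraph V) (A : Finset V) :
    G.IsIndepSet (alphaCore G A : Set V) := by
  obtain ⟨s, hsA, hs, hcard⟩ := exists_isIndepSet_card_eq_alphaOn G A
  exact hs.mono (coe_subset.2 (alphaCore_subset hsA hs hcard))

lemma sdiff_alphaCore_subset {s : Finset V} (hsA : s ⊆ A) (hs : G.IsIndepSet (s : Set V))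
    (hcard : #s = alphaOn G A) :
    s \ alphaCore G A ⊆ A \ (alphaCore G A ∪ neighborsIn G A (alphaCore G A)) := by
  intro w hw
  rw [mem_sdiff] at hw ⊢
  refine ⟨hsA hw.1, ?_⟩
  rw [mem_union]
  rintro (hwC | hwN)
  · exact hw.2 hwC
  · obtain ⟨-, c, hc, hcw⟩ := mem_neighborsIn.1 hwN
    exact hs (alphaCore_subset hsA hs hcard hc) hw.1 hcw.ne hcw

lemma alphaOn_sdiff_add_card_alphaCore (G : SimpleGraph V) (A : Finset V) :
    alphaOn G (A \ (alphaCore G A ∪ neighborsIn G A (alphaCore G A)) : Finset V) +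
      #(alphaCore G A) = alphaOn G A := by
  obtain ⟨s, hsA, hs, hcard⟩ := exists_isIndepSet_card_eq_alphaOn G A
  obtain ⟨t, htA, ht, htcard⟩ :=
    exists_isIndepSet_card_eq_alphaOn G (A \ (alphaCore G A ∪ neighborsIn G A (alphaCore G A)))
  have hts : G.IsIndepSet ↑(t ∪ alphaCore G A) := by
    rw [coe_union, isIndepSet_union_iff]
    refine ⟨ht, isIndepSet_alphaCore G A, fun a ha b hb hab => ?_⟩
    have := mem_sdiff.1 (htA ha)
    exact this.2 (mem_union_right _ (mem_neighborsIn.2 ⟨this.1, b, hb, hab.symm⟩))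
  have htC : Disjoint t (alphaCore G A) := Finset.disjoint_left.2 fun _ ha haC =>
    (mem_sdiff.1 (htA ha)).2 (mem_union_left _ haC)
  have h₁ := hts.card_le_alphaOn (union_subset (htA.trans sdiff_subset) alphaCore_subset_self)
  rw [card_union_of_disjoint htC] at h₁
  have h₂ := IsIndepSet.card_le_alphaOn (hs.mono (coe_subset.2 sdiff_subset))
    (sdiff_alphaCore_subset hsA hs hcard)
  rw [card_sdiff_of_subset (alphaCore_subset hsA hs hcard)] at h₂
  have := card_le_card (alphaCore_subset hsA hs hcard)
  omega

lemma alphaCore_sdiff_eq_empty (G : SimpleGraph V) (A : Finset V) :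
    alphaCore G (A \ (alphaCore G A ∪ neighborsIn G A (alphaCore G A))) = ∅ := by
  refine eq_empty_of_forall_notMem fun z hz => ?_
  obtain ⟨hzA₂, hzmax⟩ := mem_alphaCore.1 hz
  refine (mem_sdiff.1 hzA₂).2 (mem_union_left _ (mem_alphaCore.2 ⟨(mem_sdiff.1 hzA₂).1, ?_⟩))
  intro s hsA hs hcard
  have hCs := alphaCore_subset hsA hs hcard
  refine (mem_sdiff.1 (hzmax _ (sdiff_alphaCore_subset hsA hs hcard)
    (hs.mono (coe_subset.2 sdiff_subset)) ?_)).1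
  have := alphaOn_sdiff_add_card_alphaCore G A
  rw [card_sdiff_of_subset hCs]
  omega

theorem two_mul_alphaOn_le_card_of_card_alphaCore_le
    (h : #(alphaCore G A) ≤ #(neighborsIn G A (alphaCore G A))) : 2 * alphaOn G A ≤ #A := by
  have hA₂ := two_mul_alphaOn_le_card_of_alphaCore_eq_empty (alphaCore_sdiff_eq_empty G A)
  have hsum := alphaOn_sdiff_add_card_alphaCore G A
  have hdisj : Disjoint (alphaCore G A) (neighborsIn G A (alphaCore G A)) :=
    Finset.disjoint_right.2 fun _ hw =>
      (mem_sdiff.1 (neighborsIn_subset_sdiff (isIndepSet_alphaCore G A) hw)).2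
  have hsub := union_subset (alphaCore_subset_self (G := G) (A := A))
    (neighborsIn_subset (G := G) (S := alphaCore G A))
  rw [card_sdiff_of_subset hsub, card_union_of_disjoint hdisj] at hA₂
  have := card_le_card hsub
  rw [card_union_of_disjoint hdisj] at this
  omega

theorem _root_.IsAlphaCritical.degree_add_two_mul_alphaNum_le [DecidableRel G.Adj]
    (hG : IsAlphaCritical G) (hnb : ∀ x, ∃ y, G.Adj x y) (v : V) :
    G.degree v + 2 * alphaNum G ≤ Fintype.card V + 1 := by
  have hcrit := hG.isAlphaCriticalOn_univ
  set X := (insert v (G.neighborFinset v))ᶜ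
  have hmemX : ∀ w, w ∈ X ↔ w ≠ v ∧ ¬G.Adj v w := by simp [X]
  have hW : ∀ u, G.Adj v u → ∃ W ⊆ X, G.IsIndepSet ↑W ∧ #W + 1 = alphaNum G ∧
      ∀ w ∈ W, ¬G.Adj u w := fun u hvu => by
    obtain ⟨W, -, hW, hcard, hav⟩ := exists_isIndepSet_of_alphaOn_deleteEdges_eq hvu
      (hcrit (mem_univ _) (mem_univ _) hvu)
    exact ⟨W, fun w hw => (hmemX w).2 ⟨(hav w hw).1, (hav w hw).2.2.1⟩, hW,
      alphaNum_eq_alphaOn_univ G ▸ hcard, fun w hw => (hav w hw).2.2.2⟩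
  have hαX : alphaOn G X + 1 = alphaNum G := by
    obtain ⟨u, hvu⟩ := hnb v
    obtain ⟨W, hWX, hW, hcard, -⟩ := hW u hvu
    obtain ⟨s, hsX, hs, hscard⟩ := exists_isIndepSet_card_eq_alphaOn G X
    have h₁ := hW.card_le_alphaOn hWX
    have hvs : v ∉ s := fun h => ((hmemX v).1 (hsX h)).1 rfl
    have h₂ : G.IsIndepSet ↑(insert v s) := by
      rw [coe_insert, isIndepSet_insert_iff]
      exact ⟨hs, fun b hb => ((hmemX b).1 (hsX hb)).2⟩
    have := h₂.card_le_alphaOn (subset_univ _)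
    rw [card_insert_of_notMem hvs, ← alphaNum_eq_alphaOn_univ] at this
    omega
  -- the core of `X` lies in every `W`, so its neighbours stay inside `X`
  have hNC : neighborsIn G univ (alphaCore G X) = neighborsIn G X (alphaCore G X) := by
    ext w
    simp only [mem_neighborsIn, mem_univ, true_and]
    refine ⟨fun ⟨c, hc, hcw⟩ => ⟨(hmemX w).2 ⟨?_, fun hvw => ?_⟩, c, hc, hcw⟩, fun h => h.2⟩
    · rintro rfl
      exact ((hmemX c).1 (alphaCore_subset_self hc)).2 hcw.symm
    · obtain ⟨W, hWX, hW, hcard, hav⟩ := hW w hvw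
      exact hav c (alphaCore_subset hWX hW (by omega) hc) hcw.symm
  have hC := hcrit.card_le_card_neighborsIn (fun x _ => (hnb x).imp fun y hy => ⟨mem_univ y, hy⟩)
    (subset_univ _) (isIndepSet_alphaCore G X)
  rw [hNC] at hC
  have hX := two_mul_alphaOn_le_card_of_card_alphaCore_le hC
  rw [card_compl, card_insert_of_notMem (by simp), card_neighborFinset_eq_degree] at hX
  have := G.degree_lt_card_verts v
  omega

lemma _root_.IsAlphaCritical.eq_of_adj_of_forall_adj_eq (hG : IsAlphaCritical G) {u v w : V}
    (hv : ∀ x, G.Adj v x → x = u) (hvu : G.Adj v u) (huw : G.Adj u w) : w = v := by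
  by_contra hwv
  obtain ⟨W, -, hW, hcard, hav⟩ := exists_isIndepSet_of_alphaOn_deleteEdges_eq huw
    (hG.isAlphaCriticalOn_univ (mem_univ _) (mem_univ _) huw)
  have hind : G.IsIndepSet ↑(insert v (insert w W)) := by
    rw [coe_insert, coe_insert, isIndepSet_insert_iff, isIndepSet_insert_iff]
    refine ⟨⟨hW, fun b hb => (hav b hb).2.2.2⟩, ?_⟩
    rintro b (rfl | hb) hvb
    · exact huw.ne' (hv b hvb)
    · exact (hav b hb).1 (hv b hvb)
  have hvW : v ∉ insert w W := by
    rw [mem_insert]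
    rintro (h | h)
    exacts [hwv h.symm, (hav v h).2.2.1 hvu.symm]
  have := hind.card_le_alphaOn (subset_univ _)
  rw [card_insert_of_notMem hvW, card_insert_of_notMem fun h => (hav w h).2.1 rfl] at this
  omega

theorem _root_.IsAlphaCritical.two_le_degree [DecidableRel G.Adj] (hG : IsAlphaCritical G)
    (hconn : G.Connected) (hcard : 3 ≤ Fintype.card V) (v : V) : 2 ≤ G.degree v := by
  have : Nontrivial V := Fintype.one_lt_card_iff_nontrivial.1 (by omega)
  have hpos := hconn.preconnected.degree_pos_of_nontrivial v
  by_contra! h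
  obtain ⟨u, hvu, hv⟩ := degree_eq_one_iff_existsUnique_adj.1 (by omega : G.degree v = 1)
  have hclosed : ∀ x ∈ ({u, v} : Set V), ∀ y, G.Adj x y → y ∈ ({u, v} : Set V) := by
    rintro x (rfl | rfl) y hxy
    · exact Or.inr (hG.eq_of_adj_of_forall_adj_eq hv hvu hxy)
    · exact Or.inl (hv y hxy)
  obtain ⟨z, hz⟩ : ∃ z, z ∉ ({u, v} : Set V) := by
    by_contra! h
    have := card_le_card (show univ ⊆ {u, v} from fun x _ => by simpa using h x)
    have := card_le_two (a := u) (b := v)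
    rw [card_univ] at *
    omega
  obtain ⟨d, -, hd₁, hd₂⟩ := (hconn.preconnected v z).some.exists_boundary_dart _ (Or.inr rfl) hz
  exact hd₂ (hclosed _ hd₁ _ d.adj)

end Fintype

section Cycle

variable {W : Type*} [Fintype V] [Fintype W] {H : SimpleGraph W}

lemma Copy.nonempty_iso_of_degree_le [DecidableRel G.Adj] [DecidableRel H.Adj] (f : H.Copy G)
    (hcard : Fintype.card W = Fintype.card V) (hdeg : ∀ a, G.degree (f a) ≤ H.degree a) :
    Nonempty (H ≃g G) := by
  classical
  have hnb : ∀ a, (H.neighborFinset a).map f.toEmbedding = G.neighborFinset (f a) := fun a => by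
    refine eq_of_subset_of_card_le (fun y hy => ?_) ?_
    · obtain ⟨b, hb, rfl⟩ := mem_map.1 hy
      exact (G.mem_neighborFinset _ _).2 (f.toHom.map_adj ((H.mem_neighborFinset _ _).1 hb))
    · rw [card_map, card_neighborFinset_eq_degree, card_neighborFinset_eq_degree]
      exact hdeg a
  refine ⟨⟨Equiv.ofBijective f ((Fintype.bijective_iff_injective_and_card f).2
    ⟨f.injective, hcard⟩), fun {a b} => ⟨fun h => ?_, f.toHom.map_adj⟩⟩⟩
  obtain ⟨b', hb', hfb⟩ := mem_map.1 ((hnb a).symm ▸ (G.mem_neighborFinset _ _).2 h :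
    f b ∈ (H.neighborFinset a).map f.toEmbedding)
  rw [f.injective hfb] at hb'
  exact (H.mem_neighborFinset _ _).1 hb'

lemma cycleGraph_degree {n : ℕ} (hn : 3 ≤ n) (a : Fin n) : (cycleGraph n).degree a = 2 := by
  obtain ⟨m, rfl⟩ : ∃ m, n = m + 3 := ⟨n - 3, by omega⟩
  exact cycleGraph_degree_three_le

theorem Connected.nonempty_iso_cycleGraph [DecidableRel G.Adj] (hconn : G.Connected)
    (hdeg : ∀ v, G.degree v = 2) : Nonempty (G ≃g cycleGraph (Fintype.card V)) := by
  classical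
  obtain ⟨v⟩ := hconn.nonempty
  have hcyc : G.IsCycles := fun w _ => by
    rw [Set.ncard_eq_toFinset_card', ← neighborFinset_def, card_neighborFinset_eq_degree, hdeg]
  obtain ⟨p, hp, hverts⟩ := hcyc.exists_cycle_toSubgraph_verts_eq_connectedComponentSupp
    (c := G.connectedComponentMk v) rfl (degree_pos_iff_nonempty.1 (by rw [hdeg]; norm_num))
  have hsupp : ∀ w, w ∈ p.support := fun w => p.mem_verts_toSubgraph.1 <| hverts ▸
    ConnectedComponent.eq.2 (hconn.preconnected w v)
  have hham : p.IsHamiltonianCycle := ⟨hp, hp.isPath_tail.isHamiltonian_of_mem fun w => by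
    by_cases hw : w = v
    · exact hw ▸ p.tail.end_mem_support
    have := hsupp w
    rw [← Walk.cons_tail_support] at this
    rw [Walk.support_tail_of_not_nil _ hp.not_nil]
    exact (List.mem_cons.1 this).resolve_left hw⟩
  obtain ⟨f⟩ := (cycleGraph_isContained_iff (hham.length_eq ▸ hp.three_le_length)).2
    ⟨v, p, hp, hham.length_eq⟩
  refine ⟨(f.nonempty_iso_of_degree_le (by simp) fun a => ?_).some.symm⟩
  rw [hdeg, cycleGraph_degree (hham.length_eq ▸ hp.three_le_length)]

end Cycle

end SimpleGraph

/-- A connected α-critical graph with defect one (that is, with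
`|V(G)| = 2α(G) + 1`) is isomorphic to an odd cycle `C_n` for some odd `n ≥ 3`. -/
theorem connected_alphaCritical_defect_one {V : Type*} [Fintype V]
    (G : SimpleGraph V) (hconn : G.Connected) (hG : IsAlphaCritical G)
    (hdef : Fintype.card V = 2 * alphaNum G + 1) :
    ∃ n : ℕ, 3 ≤ n ∧ Odd n ∧ Nonempty (G ≃g SimpleGraph.cycleGraph n) := by
  classical
  obtain ⟨v⟩ := hconn.nonempty
  have hα : 1 ≤ alphaNum G := by
    simpa [alphaNum_eq_alphaOn_univ] using
      IsIndepSet.card_le_alphaOn (G := G) (s := {v}) (by simp) (Finset.subset_univ _)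
  have hcard : 3 ≤ Fintype.card V := by omega
  have : Nontrivial V := Fintype.one_lt_card_iff_nontrivial.1 (by omega)
  have hnb : ∀ x, ∃ y, G.Adj x y := fun x =>
    (G.mem_support).1 (hconn.preconnected.support_eq_univ ▸ Set.mem_univ x)
  have hdeg : ∀ w, G.degree w = 2 := fun w => le_antisymm
    (by have := hG.degree_add_two_mul_alphaNum_le hnb w; omega) (hG.two_le_degree hconn hcard w)
  exact ⟨_, hcard, ⟨alphaNum G, hdef⟩, hconn.nonempty_iso_cycleGraph hdeg⟩
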